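/- arXiv:2109.06095 — 4 statements merged into one kernel-verified Lean document; each statement's English description precedes it below -/
import Mathlib

section
/- Let (a_k)_{k≥0} be a sequence of nonnegative real numbers with a_0 > 0. If the series ∑_{k=1}^∞ a_k²/a_{k−1} converges (with the convention that terms with a_{k−1} = 0 force a_k = 0), then ∑_{k=1}^∞ a_k converges. -/
/-!
By AM–GM, `a (k+1) ≤ a k / 4 + a (k+1)^2 / a k`. Summing, the partial sums `S` of `∑ a_k` satisfy
`S ≤ a 0 + S / 4 + B`, with `B` a bound for the partial sums of `∑ a (k+1)^2 / a k`, so `S` is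
bounded.
-/

open Finset

theorem summable_of_le_mul_add {u b : ℕ → ℝ} {c : ℝ} (hu : ∀ k, 0 ≤ u k) (hc₀ : 0 ≤ c)
    (hc₁ : c < 1) (hb : Summable b) (h : ∀ k, u (k + 1) ≤ c * u k + b k) : Summable u := by
  obtain ⟨B, hB⟩ := hb.hasSum.tendsto_sum_nat.bddAbove_range
  have hmono : ∀ n, ∑ k ∈ range n, u k ≤ ∑ k ∈ range (n + 1), u k := fun n =>
    sum_le_sum_of_subset_of_nonneg (range_subset_range.mpr n.le_succ) fun k _ _ => hu k
  have hstep : ∀ n, ∑ k ∈ range (n + 1), u k ≤ u 0 + c * ∑ k ∈ range (n + 1), u k + B := by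
    intro n
    calc ∑ k ∈ range (n + 1), u k
        = u 0 + ∑ k ∈ range n, u (k + 1) := by rw [sum_range_succ', add_comm]
      _ ≤ u 0 + ∑ k ∈ range n, (c * u k + b k) := by gcongr with k; exact h k
      _ = u 0 + c * ∑ k ∈ range n, u k + ∑ k ∈ range n, b k := by
          rw [sum_add_distrib, mul_sum, add_assoc]
      _ ≤ u 0 + c * ∑ k ∈ range (n + 1), u k + B := by
          gcongr u 0 + c * ?_ + ?_
          exacts [hmono n, hB ⟨n, rfl⟩]
  refine summable_of_sum_range_le (c := (u 0 + B) / (1 - c)) hu fun n => ?_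
  rw [le_div_iff₀ (by linarith)]
  nlinarith [hstep n, hmono n]

theorem le_div_four_add_sq_div {x y : ℝ} (hy : 0 < y) : x ≤ y / 4 + x ^ 2 / y := by
  rw [div_add_div _ _ (by norm_num) hy.ne', le_div_iff₀ (by positivity)]
  nlinarith [sq_nonneg (2 * x - y)]

theorem stmt_7_general (a : ℕ → ℝ) (hnonneg : ∀ k, 0 ≤ a k)
    (hconv : ∀ k, a k = 0 → a (k + 1) = 0)
    (hsum : Summable (fun k => (a (k + 1)) ^ 2 / a k)) :
    Summable (fun k => a (k + 1)) := by
  have hstep : ∀ k, a (k + 1) ≤ 1 / 4 * a k + a (k + 1) ^ 2 / a k := by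
    intro k
    rcases (hnonneg k).eq_or_lt with hzero | hpos
    · simp [hconv k hzero.symm, ← hzero]
    · linarith [le_div_four_add_sq_div (x := a (k + 1)) hpos]
  exact (summable_of_le_mul_add hnonneg (by norm_num) (by norm_num) hsum hstep).comp_injective
    (add_left_injective 1)

/-- If `(a_k)` is a sequence of nonnegative reals with `a₀ > 0`, terms with a zero
predecessor vanish, and `∑ a_k² / a_{k−1}` converges, then `∑ a_k` converges. -/
theorem stmt_7 (a : ℕ → ℝ) (hnonneg : ∀ k, 0 ≤ a k) (h0 : 0 < a 0)
    (hconv : ∀ k, a k = 0 → a (k + 1) = 0)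
    (hsum : Summable (fun k => (a (k + 1)) ^ 2 / a k)) :
    Summable (fun k => a (k + 1)) :=
  stmt_7_general a hnonneg hconv hsum
end

section
/- Let (z_k)_{k≥0} be a sequence in a metric space (M, dist), let F : M → ℝ be bounded below with F(z_{k+1}) ≤ F(z_k) for all k, and suppose there exist ρ₁, ρ₂ > 0, a point z̄ with F(z_k) > F(z̄) for all k, and a concave C¹ function κ : [0, η) → [0, ∞) with κ(0) = 0 and κ' > 0 on (0, η), such that for all k ≥ 1: (i) F(z_{k−1}) − F(z_k) ≥ ρ₁ dist(z_{k−1}, z_k)², and (ii) if F(z_k) − F(z̄) < η then κ'(F(z_k) − F(z̄)) ≥ 1/(ρ₂ dist(z_{k−1}, z_k)). If additionally F(z_k) − F(z̄) < η for all k ≥ some index l, then dist(z_k, z_{k+1})²/dist(z_{k−1}, z_k) ≤ (ρ₂/ρ₁)[κ(F(z_k) − F(z̄)) − κ(F(z_{k+1}) − F(z̄))] for all k > l, and consequently ∑_{k} dist(z_k, z_{k+1}) < ∞ and (z_k) is a Cauchy sequence. -/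
open Set Finset

/-!
Write `e k = F (z k) - F zbar`, `d k = dist (z k) (z (k + 1))` and `s k = 1 / (ρ₂ κ'(e k))`.
Concavity of `κ` and sufficient decrease give `d k ^ 2 ≤ c k * s k` with the telescoping
`c k = (ρ₂ / ρ₁) (κ (e k) - κ (e (k + 1)))`; the KL inequality gives `s (k + 1) ≤ d k` whenever
`d k ≠ 0`, and `s` is nonincreasing because `κ'` is antitone. By AM–GM,
`d k + s (k + 1) ≤ s k + c k`, so `d k` is dominated by the decrease of the potential
`s k + (ρ₂ / ρ₁) κ (e k)`, which is bounded below; hence `∑ d k < ∞`. Using `s (k + 1)` in place of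
`d k` is what copes with the steps where `d k = 0` and the KL inequality says nothing.
-/

theorem ConcaveOn.mul_sub_le_sub_of_hasDerivAt {S : Set ℝ} {f : ℝ → ℝ} {f' x y : ℝ}
    (hf : ConcaveOn ℝ S f) (hx : x ∈ S) (hy : y ∈ S) (hxy : x ≤ y)
    (hf' : HasDerivAt f f' y) : f' * (y - x) ≤ f y - f x := by
  rcases hxy.eq_or_lt with rfl | hxy
  · simp
  have h := hf.le_slope_of_hasDerivAt hx hy hxy hf'
  rwa [slope_def_field, le_div_iff₀ (sub_pos.2 hxy)] at h

theorem ConcaveOn.antitoneOn_of_hasDerivAt {S : Set ℝ} {f f' : ℝ → ℝ}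
    (hf : ConcaveOn ℝ S f) (hf' : ∀ x ∈ S, HasDerivAt f (f' x) x) : AntitoneOn f' S := by
  intro x hx y hy hxy
  rcases hxy.eq_or_lt with rfl | hxy
  · rfl
  exact (hf.le_slope_of_hasDerivAt hx hy hxy (hf' y hy)).trans
    (hf.slope_le_of_hasDerivAt hx hy hxy (hf' x hx))

theorem summable_of_le_sub_succ {a ψ : ℕ → ℝ} {m : ℝ} (ha : ∀ k, 0 ≤ a k) (hψ : ∀ k, m ≤ ψ k)
    (h : ∀ k, a k ≤ ψ k - ψ (k + 1)) : Summable a := by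
  refine summable_of_sum_range_le ha (c := ψ 0 - m) fun n ↦ ?_
  calc ∑ k ∈ range n, a k ≤ ∑ k ∈ range n, (ψ k - ψ (k + 1)) := sum_le_sum fun k _ ↦ h k
    _ = ψ 0 - ψ n := sum_range_sub' ψ n
    _ ≤ ψ 0 - m := by linarith [hψ n]

theorem add_le_add_of_sq_le_mul {d s s' c : ℝ} (hs : 0 ≤ s) (hc : 0 ≤ c) (hsq : d ^ 2 ≤ c * s)
    (hs' : s' ≤ s) (hds' : d ≠ 0 → s' ≤ d) : d + s' ≤ s + c := by
  by_cases hd : d = 0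
  · linarith
  have : 2 * d ≤ s + c := by nlinarith [sq_nonneg (s - c)]
  linarith [hds' hd]

theorem mul_sq_le_sub_of_le_sub {κ κ' : ℝ → ℝ} {η ρ a b δ : ℝ}
    (hconc : ConcaveOn ℝ (Ico 0 η) κ) (hderiv : HasDerivAt κ (κ' a) a) (hκ' : 0 ≤ κ' a)
    (hρ : 0 ≤ ρ) (ha : a ∈ Ico 0 η) (hb : b ∈ Ico 0 η) (hdec : ρ * δ ^ 2 ≤ a - b) :
    ρ * κ' a * δ ^ 2 ≤ κ a - κ b := by
  have hba : b ≤ a := by nlinarith [mul_nonneg hρ (sq_nonneg δ)]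
  have hconc_ab := hconc.mul_sub_le_sub_of_hasDerivAt hb ha hba hderiv
  nlinarith [mul_le_mul_of_nonneg_left hdec hκ']

theorem sq_div_le_and_summable_of_kl {κ κ' : ℝ → ℝ} {η ρ₁ ρ₂ : ℝ} {e d : ℕ → ℝ}
    (hconc : ConcaveOn ℝ (Ico 0 η) κ) (hderiv : ∀ t ∈ Ioo 0 η, HasDerivAt κ (κ' t) t)
    (hκ'pos : ∀ t ∈ Ioo 0 η, 0 < κ' t) (hρ₁ : 0 < ρ₁) (hρ₂ : 0 < ρ₂)
    (he : ∀ k, e k ∈ Ioo 0 η) (hd : ∀ k, 0 ≤ d k)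
    (hdec : ∀ k, ρ₁ * d k ^ 2 ≤ e k - e (k + 1))
    (hKL : ∀ k, 1 / (ρ₂ * d k) ≤ κ' (e (k + 1))) :
    (∀ k, d (k + 1) ^ 2 / d k ≤ ρ₂ / ρ₁ * (κ (e (k + 1)) - κ (e (k + 1 + 1)))) ∧
      Summable d := by
  have hIco (k : ℕ) : e k ∈ Ico 0 η := Ioo_subset_Ico_self (he k)
  set s : ℕ → ℝ := fun k ↦ (ρ₂ * κ' (e k))⁻¹
  set c : ℕ → ℝ := fun k ↦ ρ₂ / ρ₁ * (κ (e k) - κ (e (k + 1)))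
  have hs (k : ℕ) : 0 < s k := inv_pos.2 (mul_pos hρ₂ (hκ'pos _ (he k)))
  have hsq (k : ℕ) : d k ^ 2 ≤ c k * s k := by
    have hκ' := hκ'pos _ (he k)
    have hcs : c k * s k = (κ (e k) - κ (e (k + 1))) / (ρ₁ * κ' (e k)) := by
      simp only [c, s]
      field_simp
    rw [hcs, le_div_iff₀ (by positivity)]
    linarith [mul_sq_le_sub_of_le_sub hconc (hderiv _ (he k)) hκ'.le hρ₁.le (hIco k)
      (hIco (k + 1)) (hdec k)]
  have hc (k : ℕ) : 0 ≤ c k := by nlinarith [hsq k, hs k, sq_nonneg (d k)]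
  have hs_anti (k : ℕ) : s (k + 1) ≤ s k := by
    have he_anti : e (k + 1) ≤ e k := by nlinarith [hdec k, mul_nonneg hρ₁.le (sq_nonneg (d k))]
    have hκ'_le := (hconc.subset Ioo_subset_Ico_self (convex_Ioo 0 η)).antitoneOn_of_hasDerivAt
      hderiv (he (k + 1)) (he k) he_anti
    exact inv_anti₀ (mul_pos hρ₂ (hκ'pos _ (he k))) (mul_le_mul_of_nonneg_left hκ'_le hρ₂.le)
  have hs_le (k : ℕ) (hdk : d k ≠ 0) : s (k + 1) ≤ d k := by
    have h := hKL k
    rw [div_le_iff₀ (mul_pos hρ₂ ((hd k).lt_of_ne' hdk))] at h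
    exact (inv_le_iff_one_le_mul₀' (mul_pos hρ₂ (hκ'pos _ (he (k + 1))))).2 (by linarith)
  refine ⟨fun k ↦ ?_, summable_of_le_sub_succ hd (ψ := fun k ↦ s k + ρ₂ / ρ₁ * κ (e k))
    (m := ρ₂ / ρ₁ * κ 0) (fun k ↦ ?_) (fun k ↦ ?_)⟩
  · rcases eq_or_ne (d k) 0 with hdk | hdk
    · simpa [hdk] using hc (k + 1)
    rw [div_le_iff₀ ((hd k).lt_of_ne' hdk)]
    exact (hsq (k + 1)).trans (mul_le_mul_of_nonneg_left (hs_le k hdk) (hc (k + 1)))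
  · have hκ_ge : κ 0 ≤ κ (e k) := by
      have := hconc.mul_sub_le_sub_of_hasDerivAt ⟨le_rfl, (he k).1.trans (he k).2⟩ (hIco k)
        (he k).1.le (hderiv _ (he k))
      nlinarith [mul_pos (hκ'pos _ (he k)) (he k).1]
    linarith [hs k, mul_le_mul_of_nonneg_left hκ_ge (div_pos hρ₂ hρ₁).le]
  · have := add_le_add_of_sq_le_mul (hs k).le (hc k) (hsq k) (hs_anti k) (hs_le k)
    simp only [c] at this
    linarith

theorem stmt_11_general {M : Type*} [MetricSpace M] (z : ℕ → M) (F : M → ℝ)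
    (ρ₁ ρ₂ : ℝ) (hρ₁ : 0 < ρ₁) (hρ₂ : 0 < ρ₂)
    (zbar : M) (hgt : ∀ k, F zbar < F (z k))
    (η : ℝ)
    (κ κ' : ℝ → ℝ)
    (hconc : ConcaveOn ℝ (Set.Ico (0:ℝ) η) κ)
    (hderiv : ∀ t ∈ Set.Ioo (0:ℝ) η, HasDerivAt κ (κ' t) t)
    (hκ'pos : ∀ t ∈ Set.Ioo (0:ℝ) η, 0 < κ' t)
    (hsuffdec : ∀ k, F (z k) - F (z (k + 1)) ≥ ρ₁ * dist (z k) (z (k + 1)) ^ 2)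
    (hKL : ∀ k, 1 ≤ k → F (z k) - F zbar < η →
      κ' (F (z k) - F zbar) ≥ 1 / (ρ₂ * dist (z (k - 1)) (z k)))
    (l : ℕ) (hl : ∀ k, l ≤ k → F (z k) - F zbar < η) :
    (∀ k, l < k →
      dist (z k) (z (k + 1)) ^ 2 / dist (z (k - 1)) (z k) ≤
        (ρ₂ / ρ₁) * (κ (F (z k) - F zbar) - κ (F (z (k + 1)) - F zbar))) ∧
      Summable (fun k => dist (z k) (z (k + 1))) ∧ CauchySeq z := by
  obtain ⟨hsq, hsum⟩ := sq_div_le_and_summable_of_kl (e := fun k ↦ F (z (k + l)) - F zbar)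
    (d := fun k ↦ dist (z (k + l)) (z (k + l + 1))) hconc hderiv hκ'pos hρ₁ hρ₂
    (fun k ↦ ⟨sub_pos.2 (hgt _), hl _ (by omega)⟩) (fun _ ↦ dist_nonneg)
    (fun k ↦ by simpa [add_right_comm] using hsuffdec (k + l))
    (fun k ↦ by simpa [add_right_comm] using hKL (k + l + 1) (by omega) (hl _ (by omega)))
  have hsum' : Summable fun k ↦ dist (z k) (z (k + 1)) := (summable_nat_add_iff l).1 hsum
  refine ⟨fun k hk ↦ ?_, hsum', cauchySeq_of_summable_dist hsum'⟩
  obtain ⟨j, rfl⟩ : ∃ j, k = j + 1 + l := ⟨k - (l + 1), by omega⟩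
  simpa [add_right_comm] using hsq j

/-- Finite-length argument under the Kurdyka–Łojasiewicz property: for a
nonincreasing, bounded-below `F` along a sequence `(z_k)` in a metric space, with a
sufficient decrease property (i) and a KL-type gradient inequality (ii) via a
concave `C¹` desingularizing function `κ`, if eventually `F(z_k) − F(z̄) < η` then
`dist(z_k, z_{k+1})²/dist(z_{k−1}, z_k)` is bounded by the telescoping
`(ρ₂/ρ₁)[κ(F(z_k) − F(z̄)) − κ(F(z_{k+1}) − F(z̄))]`, the series of consecutive
distances converges, and `(z_k)` is Cauchy. -/
theorem stmt_11 {M : Type*} [MetricSpace M] (z : ℕ → M) (F : M → ℝ)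
    (B : ℝ) (hbelow : ∀ m, B ≤ F m)
    (hmono : ∀ k, F (z (k + 1)) ≤ F (z k))
    (ρ₁ ρ₂ : ℝ) (hρ₁ : 0 < ρ₁) (hρ₂ : 0 < ρ₂)
    (zbar : M) (hgt : ∀ k, F zbar < F (z k))
    (η : ℝ) (hη : 0 < η)
    (κ κ' : ℝ → ℝ)
    (hconc : ConcaveOn ℝ (Set.Ico (0:ℝ) η) κ) (hκ0 : κ 0 = 0)
    (hderiv : ∀ t ∈ Set.Ioo (0:ℝ) η, HasDerivAt κ (κ' t) t)
    (hκ'pos : ∀ t ∈ Set.Ioo (0:ℝ) η, 0 < κ' t)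
    (hsuffdec : ∀ k, F (z k) - F (z (k + 1)) ≥ ρ₁ * dist (z k) (z (k + 1)) ^ 2)
    (hKL : ∀ k, 1 ≤ k → F (z k) - F zbar < η →
      κ' (F (z k) - F zbar) ≥ 1 / (ρ₂ * dist (z (k - 1)) (z k)))
    (l : ℕ) (hl : ∀ k, l ≤ k → F (z k) - F zbar < η) :
    (∀ k, l < k →
      dist (z k) (z (k + 1)) ^ 2 / dist (z (k - 1)) (z k) ≤
        (ρ₂ / ρ₁) * (κ (F (z k) - F zbar) - κ (F (z (k + 1)) - F zbar))) ∧
      Summable (fun k => dist (z k) (z (k + 1))) ∧ CauchySeq z :=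
  stmt_11_general z F ρ₁ ρ₂ hρ₁ hρ₂ zbar hgt η κ κ' hconc hderiv hκ'pos hsuffdec hKL l hl
end

section
/- If the columns of X ∈ ℝ^{n×s} all belong to a union of p affine subspaces of ℝⁿ each of dimension at most r̃, then the matrix Φ_d(X) ∈ ℝ^{N(n,d)×s}, whose j-th column is the degree-d monomial feature vector φ_d(x_j) of the j-th column of X, has rank at most p·C(r̃+d, d). -/
/-!
Write a point of an affine subspace `S` as `x = x₀ + ∑ₖ cₖ vₖ` with `v` a basis of its direction,
`m = dim S ≤ r̃`. Each coordinate of `x` is then an affine-linear polynomial in `c`, so each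
monomial of degree `≤ d` in `x` is a polynomial of degree `≤ d` in `c`, and `φ_d(x)` is a linear
combination of the coefficient vectors of the `C(m + d, d)` monomials `c^β` with `|β| ≤ d`. The
columns of `Φ_d(X)` therefore lie in a sum of `p` subspaces of dimension `≤ C(r̃ + d, d)`.
-/

open Finset Module Submodule MvPolynomial

theorem Finsupp.mem_image_some_finsuppAntidiag {σ : Type*} [Fintype σ] [DecidableEq σ] {d : ℕ}
    {β : σ →₀ ℕ} (hβ : β.degree ≤ d) :
    β ∈ (univ.finsuppAntidiag d : Finset (Option σ →₀ ℕ)).image Finsupp.some := by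
  refine mem_image.2 ⟨β.optionElim (d - β.degree), ?_, some_optionElim _ _⟩
  rw [mem_finsuppAntidiag, Fintype.sum_option, optionElim_apply_none]
  simp only [optionElim_apply_some, ← degree_eq_sum]
  exact ⟨Nat.sub_add_cancel hβ, subset_univ _⟩

theorem Submodule.finrank_biSup_le_sum {K V ι : Type*} [DivisionRing K] [AddCommGroup V]
    [Module K V] [FiniteDimensional K V] (W : ι → Submodule K V) (s : Finset ι) :
    finrank K ↥(⨆ i ∈ s, W i) ≤ ∑ i ∈ s, finrank K (W i) := by
  classical
  induction s using Finset.induction_on with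
  | empty => simp
  | insert i s hi ih =>
    rw [Finset.iSup_insert, sum_insert hi]
    exact (finrank_add_le_finrank_add_finrank _ _).trans (by gcongr)

theorem Matrix.rank_le_mul_of_forall_col_mem {K m n : Type*} [Field K] [Finite m] [Fintype n]
    {p c : ℕ} (A : Matrix m n K) (V : Fin p → Submodule K (m → K))
    (hV : ∀ i, finrank K (V i) ≤ c) (hA : ∀ j, ∃ i, A.col j ∈ V i) :
    A.rank ≤ p * c := by
  have hspan : span K (Set.range A.col) ≤ ⨆ i ∈ (univ : Finset (Fin p)), V i := by
    refine span_le.2 ?_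
    rintro _ ⟨j, rfl⟩
    obtain ⟨i, hi⟩ := hA j
    exact (le_biSup V (mem_univ i)) hi
  calc A.rank = finrank K (span K (Set.range A.col)) := A.rank_eq_finrank_span_cols
    _ ≤ ∑ i, finrank K (V i) := (finrank_mono hspan).trans (finrank_biSup_le_sum V univ)
    _ ≤ p * c := (sum_le_sum fun i _ => hV i).trans_eq (by simp)

theorem MvPolynomial.totalDegree_prod_pow_le_degree {R σ ν : Type*} [CommSemiring R] [Fintype ν]
    (L : ν → MvPolynomial σ R) (hL : ∀ i, (L i).totalDegree ≤ 1) (e : ν →₀ ℕ) :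
    (∏ i, L i ^ e i).totalDegree ≤ e.degree := by
  refine (totalDegree_finsetProd _ _).trans ?_
  rw [Finsupp.degree_eq_sum]
  exact sum_le_sum fun i _ =>
    (totalDegree_pow _ _).trans (by simpa using Nat.mul_le_mul_left (e i) (hL i))

theorem MvPolynomial.exists_finrank_le_forall_eval_mem {K σ ι : Type*} [Field K] [Fintype σ]
    {d : ℕ} (P : ι → MvPolynomial σ K) (hP : ∀ i, (P i).totalDegree ≤ d) :
    ∃ V : Submodule K (ι → K), finrank K V ≤ (Fintype.card σ + d).choose d ∧
      ∀ c : σ → K, (fun i => eval c (P i)) ∈ V := by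
  classical
  -- monomials of degree `≤ d` in `σ` are dehomogenizations of monomials of degree `d` in `Option σ`
  set D := (univ.finsuppAntidiag d : Finset (Option σ →₀ ℕ)).image Finsupp.some
  have hD : #D ≤ (Fintype.card σ + d).choose d :=
    card_image_le.trans (by simp [card_finsuppAntidiag_nat_eq_choose])
  have hsupp : ∀ i, (P i).support ⊆ D := fun i β hβ =>
    Finsupp.mem_image_some_finsuppAntidiag ((le_totalDegree hβ).trans (hP i))
  let w : D → ι → K := fun β i => coeff β (P i)
  refine ⟨span K (Set.range w), (finrank_range_le_card w).trans (by simpa using hD), fun c => ?_⟩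
  have heval : (fun i => eval c (P i)) = ∑ β : D, (∏ k, c k ^ (β : σ →₀ ℕ) k) • w β := by
    funext i
    rw [eval_eq', sum_subset (hsupp i) fun β _ hβ => by rw [notMem_support_iff.1 hβ, zero_mul],
      ← sum_coe_sort]
    simp [w, mul_comm]
  rw [heval]
  exact sum_mem fun β _ => smul_mem _ _ (subset_span ⟨β, rfl⟩)

theorem AffineSubspace.exists_totalDegree_le_one_parametrization {K ν : Type*} [Field K] [Finite ν]
    (S : AffineSubspace K (ν → K)) :
    ∃ L : ν → MvPolynomial (Fin (finrank K S.direction)) K, (∀ i, (L i).totalDegree ≤ 1) ∧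
      ∀ x ∈ S, ∃ c, x = fun i => eval c (L i) := by
  rcases (S : Set (ν → K)).eq_empty_or_nonempty with hS | ⟨x₀, hx₀⟩
  · exact ⟨0, by simp, fun x hx => (Set.eq_empty_iff_forall_notMem.1 hS x hx).elim⟩
  let b := finBasis K S.direction
  refine ⟨fun i => C (x₀ i) + ∑ k, C ((b k : ν → K) i) * X k, fun i => ?_, fun x hx => ?_⟩
  · refine (totalDegree_add _ _).trans (max_le (by simp) ?_)
    refine (totalDegree_finsetSum _ _).trans (Finset.sup_le fun k _ => ?_)
    exact (totalDegree_mul _ _).trans (by simp [totalDegree_X])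
  · set v : S.direction := ⟨x -ᵥ x₀, S.vsub_mem_direction hx hx₀⟩
    refine ⟨b.repr v, funext fun i => ?_⟩
    have hi := congrArg (fun w : S.direction => (w : ν → K) i) (b.sum_repr v)
    simp only [Submodule.coe_sum, Submodule.coe_smul, Finset.sum_apply, Pi.smul_apply,
      smul_eq_mul] at hi
    rw [show x i = x₀ i + (v : ν → K) i by simp [v], ← hi]
    simp [mul_comm]

theorem AffineSubspace.exists_finrank_le_forall_monomials_mem {K ν ι : Type*} [Field K] [Fintype ν]
    (S : AffineSubspace K (ν → K)) {r d : ℕ} (hS : finrank K S.direction ≤ r)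
    (e : ι → ν →₀ ℕ) (he : ∀ a, (e a).degree ≤ d) :
    ∃ V : Submodule K (ι → K), finrank K V ≤ (r + d).choose d ∧
      ∀ x ∈ S, (fun a => ∏ i, x i ^ e a i) ∈ V := by
  obtain ⟨L, hL, hS_param⟩ := S.exists_totalDegree_le_one_parametrization
  obtain ⟨V, hVdim, hV⟩ := exists_finrank_le_forall_eval_mem (fun a => ∏ i, L i ^ e a i)
    fun a => (totalDegree_prod_pow_le_degree L hL (e a)).trans (he a)
  refine ⟨V, hVdim.trans (Nat.choose_le_choose d (by simpa using hS)), fun x hx => ?_⟩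
  obtain ⟨c, rfl⟩ := hS_param x hx
  simpa using hV c

/-- If all columns of `X ∈ ℝ^{n×s}` lie in a union of `p` affine subspaces of
dimension at most `r̃`, then the degree-`d` monomial feature matrix `Φ_d(X)`
(whose `j`-th column lists all monomials of total degree ≤ `d` evaluated at the
`j`-th column of `X`) has rank at most `p · C(r̃ + d, d)`. -/
theorem stmt_14 {n s : ℕ} (d rt p : ℕ) (X : Matrix (Fin n) (Fin s) ℝ)
    (S : Fin p → AffineSubspace ℝ (Fin n → ℝ))
    (hdim : ∀ i, Module.finrank ℝ (S i).direction ≤ rt)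
    (hcols : ∀ j, ∃ i, (fun a => X a j) ∈ S i) :
    letI Φ : Matrix {α : Fin n →₀ ℕ // (α.sum fun _ e => e) ≤ d} (Fin s) ℝ :=
      fun α j => ∏ i : Fin n, X i j ^ (α.1 i)
    Φ.rank ≤ p * Nat.choose (rt + d) d := by
  have : Finite {α : Fin n →₀ ℕ // (α.sum fun _ e => e) ≤ d} :=
    (Finsupp.finite_of_degree_le d).to_subtype
  choose V hVdim hV using fun i => (S i).exists_finrank_le_forall_monomials_mem (hdim i)
    (fun α : {α : Fin n →₀ ℕ // (α.sum fun _ e => e) ≤ d} => α.1) fun α => α.2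
  exact Matrix.rank_le_mul_of_forall_col_mem _ V hVdim fun j => (hcols j).imp fun i hi => hV i _ hi
end

section
/- Let f : ℝ^k → ℝ be bounded below by f* and satisfy the quadratic upper bound |f(x+η) − f(x) − ⟨∇f(x),η⟩| ≤ (L/2)‖η‖² for all x, η. Consider iterations x_{j+1} = x_j − α_j ∇f(x_j) where each α_j is produced by Armijo backtracking with parameters β, τ ∈ (0,1) and initial step α₀ > 0, and the iteration stops the first time ‖∇f(x_j)‖ ≤ ε for a given ε > 0. Then the number of iterations N before stopping satisfies N ≤ (f(x_0) − f*)/(β·min{α₀, 2τ(1−β)/L}·ε²). -/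
/-!
By the quadratic upper bound, every step `a ∈ (0, 2(1 − β)/L]` satisfies the Armijo condition.
Backtracking therefore stops either at `α₀` or one factor `τ` below a step exceeding
`2(1 − β)/L`, so every accepted step is at least `min{α₀, 2τ(1 − β)/L}` and, while the gradient
is larger than `ε`, decreases `f` by at least `β · min{α₀, 2τ(1 − β)/L} · ε²`. Summing these
decreases over the `N` iterations and using `f ≥ f*` bounds `N`.
-/

open scoped RealInnerProductSpace

section Descent

variable {E : Type*} [NormedAddCommGroup E] [InnerProductSpace ℝ E] {f : E → ℝ} {g : E → E}
  {L : ℝ}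

theorem le_sub_of_quadratic_upper_bound
    (hquad : ∀ x η, f (x + η) - f x - ⟪g x, η⟫ ≤ L / 2 * ‖η‖ ^ 2) (y : E) (a : ℝ) :
    f (y - a • g y) ≤ f y - a * (1 - L * a / 2) * ‖g y‖ ^ 2 := by
  have h := hquad y (-(a • g y))
  rw [← sub_eq_add_neg, inner_neg_right, real_inner_smul_right, real_inner_self_eq_norm_sq,
    norm_neg, norm_smul, mul_pow, Real.norm_eq_abs, sq_abs] at h
  linarith

theorem armijo_of_le (hquad : ∀ x η, f (x + η) - f x - ⟪g x, η⟫ ≤ L / 2 * ‖η‖ ^ 2)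
    (hL : 0 < L) {β a : ℝ} (ha : 0 ≤ a) (hale : a ≤ 2 * (1 - β) / L) (y : E) :
    f (y - a • g y) ≤ f y - β * a * ‖g y‖ ^ 2 := by
  have hLa : L * a / 2 ≤ 1 - β := by
    rw [le_div_iff₀ hL] at hale
    linarith
  have hdecr : β * a * ‖g y‖ ^ 2 ≤ a * (1 - L * a / 2) * ‖g y‖ ^ 2 := by
    have : β * a ≤ a * (1 - L * a / 2) := by nlinarith
    exact mul_le_mul_of_nonneg_right this (sq_nonneg _)
  linarith [le_sub_of_quadratic_upper_bound hquad y a]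

end Descent

theorem min_le_of_first_accepted {P : ℝ → Prop} {α₀ τ c : ℝ} (hα₀ : 0 < α₀) (hτ : 0 < τ)
    (hP : ∀ a, 0 < a → a ≤ c → P a) {i : ℕ} (hfirst : ∀ i' < i, ¬P (α₀ * τ ^ i')) :
    min α₀ (τ * c) ≤ α₀ * τ ^ i := by
  cases i with
  | zero => simp
  | succ n =>
    have hc : c < α₀ * τ ^ n := by
      by_contra! hle
      exact hfirst n n.lt_succ_self (hP _ (by positivity) hle)
    calc min α₀ (τ * c) ≤ τ * c := min_le_right _ _
      _ ≤ τ * (α₀ * τ ^ n) := by gcongr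
      _ = α₀ * τ ^ (n + 1) := by ring

theorem nat_mul_le_sub_of_forall_le_sub {u : ℕ → ℝ} {d : ℝ} {N : ℕ}
    (h : ∀ j < N, u (j + 1) ≤ u j - d) : N * d ≤ u 0 - u N := by
  rw [← Finset.sum_range_sub']
  calc (N : ℝ) * d = ∑ _ ∈ Finset.range N, d := by simp
    _ ≤ ∑ j ∈ Finset.range N, (u j - u (j + 1)) := by
      refine Finset.sum_le_sum fun j hj => ?_
      linarith [h j (Finset.mem_range.mp hj)]

theorem stmt_18_general {k : ℕ} (f : EuclideanSpace ℝ (Fin k) → ℝ)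
    (g : EuclideanSpace ℝ (Fin k) → EuclideanSpace ℝ (Fin k))
    (fstar : ℝ) (hbound : ∀ y, fstar ≤ f y)
    (L : ℝ) (hL : 0 < L)
    (hquad : ∀ x η : EuclideanSpace ℝ (Fin k),
      |f (x + η) - f x - inner ℝ (g x) η| ≤ L / 2 * ‖η‖ ^ 2)
    (β τ α₀ ε : ℝ) (hβ : β ∈ Set.Ioo (0:ℝ) 1) (hτ : τ ∈ Set.Ioo (0:ℝ) 1)
    (hα₀ : 0 < α₀) (hε : 0 < ε)
    (N : ℕ) (x : ℕ → EuclideanSpace ℝ (Fin k)) (α : ℕ → ℝ)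
    (hrun : ∀ j < N, ε < ‖g (x j)‖)
    (hupd : ∀ j < N, x (j + 1) = x j - α j • g (x j))
    (hback : ∀ j < N, ∃ i : ℕ, α j = α₀ * τ ^ i ∧
      f (x j - (α₀ * τ ^ i) • g (x j)) ≤ f (x j) - β * (α₀ * τ ^ i) * ‖g (x j)‖ ^ 2 ∧
      ∀ i' < i, ¬(f (x j - (α₀ * τ ^ i') • g (x j)) ≤
        f (x j) - β * (α₀ * τ ^ i') * ‖g (x j)‖ ^ 2)) :
    (N : ℝ) ≤ (f (x 0) - fstar) / (β * min α₀ (2 * τ * (1 - β) / L) * ε ^ 2) := by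
  have hquad' : ∀ x η, f (x + η) - f x - ⟪g x, η⟫ ≤ L / 2 * ‖η‖ ^ 2 :=
    fun x η => (abs_le.mp (hquad x η)).2
  rw [show 2 * τ * (1 - β) / L = τ * (2 * (1 - β) / L) by ring]
  set m := min α₀ (τ * (2 * (1 - β) / L))
  have hm : 0 < m := lt_min hα₀ (mul_pos hτ.1 (div_pos (by linarith [hβ.2]) hL))
  have hstep : ∀ j < N, f (x (j + 1)) ≤ f (x j) - β * m * ε ^ 2 := by
    intro j hj
    obtain ⟨i, hαj, haccept, hfirst⟩ := hback j hj
    have hαm : m ≤ α j := hαj ▸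
      min_le_of_first_accepted hα₀ hτ.1 (fun a ha hale => armijo_of_le hquad' hL ha.le hale _)
        hfirst
    have hgrad : ε ^ 2 ≤ ‖g (x j)‖ ^ 2 := pow_le_pow_left₀ hε.le (hrun j hj).le 2
    calc f (x (j + 1)) ≤ f (x j) - β * α j * ‖g (x j)‖ ^ 2 := by rw [hupd j hj, hαj]; exact haccept
      _ ≤ f (x j) - β * m * ε ^ 2 := by
        have := hβ.1
        gcongr
        exact mul_nonneg this.le (hm.le.trans hαm)
  have hdecr := nat_mul_le_sub_of_forall_le_sub (u := fun j => f (x j)) hstep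
  rw [le_div_iff₀ (by have := hβ.1; positivity)]
  linarith [hbound (x N)]

/-- Complexity of gradient descent with Armijo backtracking: if `f` is bounded
below by `f*`, satisfies the quadratic upper bound with constant `L > 0`, each
iterate is updated by `x_{j+1} = x_j − α_j ∇f(x_j)` where `α_j` is the first
element of the backtracking sequence `α₀, τα₀, τ²α₀, …` satisfying the Armijo
condition, and `‖∇f(x_j)‖ > ε` for all `j < N` (the method has not yet stopped),
then `N ≤ (f(x₀) − f*)/(β · min{α₀, 2τ(1−β)/L} · ε²)`. -/
theorem stmt_18 {k : ℕ} (f : EuclideanSpace ℝ (Fin k) → ℝ)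
    (g : EuclideanSpace ℝ (Fin k) → EuclideanSpace ℝ (Fin k))
    (hdiff : ∀ y, HasGradientAt f (g y) y)
    (fstar : ℝ) (hbound : ∀ y, fstar ≤ f y)
    (L : ℝ) (hL : 0 < L)
    (hquad : ∀ x η : EuclideanSpace ℝ (Fin k),
      |f (x + η) - f x - inner ℝ (g x) η| ≤ L / 2 * ‖η‖ ^ 2)
    (β τ α₀ ε : ℝ) (hβ : β ∈ Set.Ioo (0:ℝ) 1) (hτ : τ ∈ Set.Ioo (0:ℝ) 1)
    (hα₀ : 0 < α₀) (hε : 0 < ε)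
    (N : ℕ) (x : ℕ → EuclideanSpace ℝ (Fin k)) (α : ℕ → ℝ)
    (hrun : ∀ j < N, ε < ‖g (x j)‖)
    (hupd : ∀ j < N, x (j + 1) = x j - α j • g (x j))
    (hback : ∀ j < N, ∃ i : ℕ, α j = α₀ * τ ^ i ∧
      f (x j - (α₀ * τ ^ i) • g (x j)) ≤ f (x j) - β * (α₀ * τ ^ i) * ‖g (x j)‖ ^ 2 ∧
      ∀ i' < i, ¬(f (x j - (α₀ * τ ^ i') • g (x j)) ≤
        f (x j) - β * (α₀ * τ ^ i') * ‖g (x j)‖ ^ 2)) :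
    (N : ℝ) ≤ (f (x 0) - fstar) / (β * min α₀ (2 * τ * (1 - β) / L) * ε ^ 2) :=
  stmt_18_general f g fstar hbound L hL hquad β τ α₀ ε hβ hτ hα₀ hε N x α hrun hupd hback
end
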